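/- arXiv:1611.02062 — 4 statements merged into one kernel-verified Lean document; each statement's English description precedes it below -/
import Mathlib

section
/- Let α ∈ F_q^n have pairwise distinct entries and let v, w ∈ (F_q^×)^n. Then GRS_k(α,v) ⋆ GRS_ℓ(α,w) = GRS_{min(k+ℓ-1, n)}(α, v ⋆ w), where v ⋆ w denotes the coordinatewise product. -/
open Polynomial Finset

variable {F : Type*} [Field F]

/-- Star (Schur) product of two codes: span of coordinatewise products. -/
def starProd {n : ℕ} (C D : Submodule F (Fin n → F)) : Submodule F (Fin n → F) :=
  Submodule.span F {x | ∃ c ∈ C, ∃ d ∈ D, x = c * d}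

/-- Dual code w.r.t. the standard bilinear form. -/
def dualCode {n : ℕ} (C : Submodule F (Fin n → F)) : Submodule F (Fin n → F) where
  carrier := {w | ∀ c ∈ C, ∑ i, c i * w i = 0}
  add_mem' := by
    intro a b ha hb c hc
    have h1 := ha c hc
    have h2 := hb c hc
    simp only [Set.mem_setOf_eq] at *
    calc ∑ i, c i * (a + b) i = (∑ i, c i * a i) + ∑ i, c i * b i := by
          rw [← Finset.sum_add_distrib]
          exact Finset.sum_congr rfl fun i _ => by simp [mul_add]
      _ = 0 := by rw [h1, h2, add_zero]
  zero_mem' := by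
    intro c hc
    simp
  smul_mem' := by
    intro r a ha c hc
    have h := ha c hc
    simp only [Set.mem_setOf_eq] at *
    calc ∑ i, c i * (r • a) i = r * ∑ i, c i * a i := by
          rw [Finset.mul_sum]
          exact Finset.sum_congr rfl fun i _ => by simp [smul_eq_mul]; ring
      _ = 0 := by rw [h, mul_zero]

/-- The repetition code: span of the all-ones vector. -/
def repCode (F : Type*) [Field F] (n : ℕ) : Submodule F (Fin n → F) :=
  Submodule.span F {fun _ => (1 : F)}

/-- `d` is the minimum Hamming distance of the linear code `C`. -/
def IsMinDist {n : ℕ} [DecidableEq F] (C : Submodule F (Fin n → F)) (d : ℕ) : Prop :=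
  (∃ c ∈ C, c ≠ 0 ∧ hammingNorm c = d) ∧ ∀ c ∈ C, c ≠ 0 → d ≤ hammingNorm c

/-- Evaluation map `f ↦ (v i * f(α i))_i`. -/
def grsEval {F : Type*} [Field F] (n : ℕ) (α v : Fin n → F) :
    Polynomial F →ₗ[F] (Fin n → F) where
  toFun := fun f => fun i => v i * f.eval (α i)
  map_add' := by intro f g; funext i; simp [mul_add]
  map_smul' := by intro r f; funext i; simp [smul_eq_mul]; ring

/-- Generalized Reed–Solomon code of dimension (at most) `k`. -/
noncomputable def GRS {F : Type*} [Field F] (n k : ℕ) (α v : Fin n → F) :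
    Submodule F (Fin n → F) :=
  (Polynomial.degreeLT F k).map (grsEval n α v)

lemma grsEval_mul {n : ℕ} (α v w : Fin n → F) (f g : F[X]) :
    grsEval n α v f * grsEval n α w g = grsEval n α (v * w) (f * g) := by
  funext i
  simp only [grsEval, LinearMap.coe_mk, AddHom.coe_mk, Pi.mul_apply, eval_mul]
  ring

lemma GRS_top {n : ℕ} (α u : Fin n → F) (hα : Function.Injective α) (hu : ∀ i, u i ≠ 0) :
    GRS n n α u = ⊤ := by
  rw [eq_top_iff]
  intro x _
  refine ⟨Lagrange.interpolate Finset.univ α (fun i => x i / u i), ?_, ?_⟩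
  · rw [SetLike.mem_coe, Polynomial.mem_degreeLT]
    simpa only [Finset.card_univ, Fintype.card_fin] using
      Lagrange.degree_interpolate_lt (s := Finset.univ) (fun i => x i / u i) hα.injOn
  · funext i
    simp only [grsEval, LinearMap.coe_mk, AddHom.coe_mk]
    rw [Lagrange.eval_interpolate_at_node _ hα.injOn (Finset.mem_univ i),
      mul_comm, div_mul_cancel₀ _ (hu i)]

theorem star_GRS_eq_GRS {F : Type*} [Field F] [Fintype F] {n k ℓ : ℕ}
    (α v w : Fin n → F) (hα : Function.Injective α)
    (hv : ∀ i, v i ≠ 0) (hw : ∀ i, w i ≠ 0) (hk : 1 ≤ k) (hl : 1 ≤ ℓ) :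
    starProd (GRS n k α v) (GRS n ℓ α w) = GRS n (min (k + ℓ - 1) n) α (v * w) := by
  classical
  have hvw : ∀ i, (v * w) i ≠ 0 := fun i => mul_ne_zero (hv i) (hw i)
  apply le_antisymm
  · rw [starProd, Submodule.span_le]
    rintro x ⟨c, hc, d, hd, rfl⟩
    obtain ⟨f, hf, rfl⟩ := hc
    obtain ⟨g, hg, rfl⟩ := hd
    rw [SetLike.mem_coe, grsEval_mul]
    rcases le_or_gt (k + ℓ - 1) n with h | h
    · rw [min_eq_left h]
      refine ⟨f * g, ?_, rfl⟩
      simp only [SetLike.mem_coe] at hf hg ⊢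
      rw [Polynomial.mem_degreeLT] at hf hg ⊢
      rcases eq_or_ne f 0 with rfl | hf0
      · simp only [zero_mul, Polynomial.degree_zero]
        exact WithBot.bot_lt_coe _
      rcases eq_or_ne g 0 with rfl | hg0
      · simp only [mul_zero, Polynomial.degree_zero]
        exact WithBot.bot_lt_coe _
      refine lt_of_le_of_lt (Polynomial.degree_mul_le f g) ?_
      rw [Polynomial.degree_eq_natDegree hf0] at hf ⊢
      rw [Polynomial.degree_eq_natDegree hg0] at hg ⊢
      rw [Nat.cast_lt] at hf hg
      rw [← Nat.cast_add, Nat.cast_lt]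
      omega
    · rw [min_eq_right h.le, GRS_top α (v*w) hα hvw]
      trivial
  · rw [GRS, Polynomial.degreeLT_eq_span_X_pow, Submodule.map_span, Submodule.span_le]
    rintro x ⟨p, hp, rfl⟩
    simp only [Finset.coe_image, Set.mem_image, Finset.mem_coe, Finset.mem_range] at hp
    obtain ⟨m, hm, rfl⟩ := hp
    have hm' : m < k + ℓ - 1 := lt_of_lt_of_le hm (min_le_left _ _)
    set a := min m (k - 1) with ha
    have hab : m = a + (m - a) := by omega
    have hX : (X : F[X]) ^ m = X ^ a * X ^ (m - a) := by rw [← pow_add, ← hab]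
    rw [hX, ← grsEval_mul]
    apply Submodule.subset_span
    refine ⟨_, ⟨X ^ a, ?_, rfl⟩, _, ⟨X ^ (m - a), ?_, rfl⟩, rfl⟩
    · rw [SetLike.mem_coe, Polynomial.mem_degreeLT, Polynomial.degree_X_pow, Nat.cast_lt]; omega
    · rw [SetLike.mem_coe, Polynomial.mem_degreeLT, Polynomial.degree_X_pow, Nat.cast_lt]; omega
end

section
/- Let α ∈ F_q^n have pairwise distinct entries, v ∈ (F_q^×)^n, and 1 ≤ k < n. Define u ∈ (F_q^×)^n by u_i = (v_i · ∏_{j ≠ i} (α_i - α_j))^{-1}. Then the dual code of GRS_k(α,v) equals GRS_{n-k}(α,u). -/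
open Polynomial Finset

variable {F : Type*} [Field F]

/-- Leading coefficient of a Lagrange basis polynomial. -/
lemma leadingCoeff_lagrange_basis {n : ℕ} (α : Fin n → F) (hα : Function.Injective α)
    (i : Fin n) :
    (Lagrange.basis Finset.univ α i).coeff (n - 1) =
      (∏ j ∈ Finset.univ.erase i, (α i - α j))⁻¹ := by
  have hinj : Set.InjOn α (Finset.univ : Finset (Fin n)) := hα.injOn
  have hc : (Finset.univ : Finset (Fin n)).card = n := Finset.card_univ.trans (Fintype.card_fin n)
  have hnd : (Lagrange.basis Finset.univ α i).natDegree = n - 1 := by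
    rw [Lagrange.natDegree_basis hinj (Finset.mem_univ i), hc]
  rw [← hnd, Polynomial.coeff_natDegree]
  rw [Lagrange.basis, Polynomial.leadingCoeff_prod, ← Finset.prod_inv_distrib]
  refine Finset.prod_congr rfl fun j hj => ?_
  have hij : α i - α j ≠ 0 := by
    rw [sub_ne_zero]
    exact fun h => (Finset.mem_erase.1 hj).1 (hα h).symm
  rw [Lagrange.basisDivisor, Polynomial.leadingCoeff_mul, Polynomial.leadingCoeff_C,
    (Polynomial.monic_X_sub_C (α j)).leadingCoeff, mul_one]

/-- Key identity: sum of p(α i)/∏(α i - α j) vanishes for deg p < n - 1. -/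
lemma sum_eval_div_prod_eq_zero {n : ℕ} (α : Fin n → F) (hα : Function.Injective α)
    (p : F[X]) (hp : p.degree < (n - 1 : ℕ)) :
    ∑ i, p.eval (α i) * (∏ j ∈ Finset.univ.erase i, (α i - α j))⁻¹ = 0 := by
  have hinj : Set.InjOn α (Finset.univ : Finset (Fin n)) := hα.injOn
  have hc : (Finset.univ : Finset (Fin n)).card = n := Finset.card_univ.trans (Fintype.card_fin n)
  have hpn : p.degree < ((Finset.univ : Finset (Fin n)).card : ℕ) := by
    rw [hc]
    exact hp.trans_le (WithBot.coe_le_coe.2 (Nat.sub_le n 1))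
  have hrep := Lagrange.eq_interpolate hinj hpn
  have h0 : p.coeff (n - 1) = 0 := Polynomial.coeff_eq_zero_of_degree_lt hp
  rw [hrep, Lagrange.interpolate_apply, Polynomial.finset_sum_coeff] at h0
  rw [← h0]
  refine Finset.sum_congr rfl fun i _ => ?_
  rw [Polynomial.coeff_C_mul, leadingCoeff_lagrange_basis α hα i]


lemma eval_mem_degreeLT {k : ℕ} {p : F[X]} (hp : p ∈ degreeLT F k) (x : F) :
    p.eval x = ∑ m : Fin k, p.coeff m * x ^ (m : ℕ) := by
  by_cases h0 : p = 0
  · simp [h0]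
  · rw [mem_degreeLT, degree_eq_natDegree h0, Nat.cast_lt] at hp
    rw [eval_eq_sum_range' hp, ← Fin.sum_univ_eq_sum_range]

open Matrix

/-- The generator matrix of a GRS code. -/
def grsMat (n k : ℕ) (α v : Fin n → F) : Matrix (Fin k) (Fin n) F :=
  Matrix.of fun m i => v i * α i ^ (m : ℕ)

lemma GRS_eq_range (n k : ℕ) (α v : Fin n → F) :
    GRS n k α v = LinearMap.range (grsMat n k α v)ᵀ.mulVecLin := by
  ext w
  simp only [GRS, Submodule.mem_map, LinearMap.mem_range]
  constructor
  · rintro ⟨p, hp, rfl⟩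
    refine ⟨fun m => p.coeff m, ?_⟩
    funext i
    simp only [Matrix.mulVecLin_apply, Matrix.mulVec, dotProduct, Matrix.transpose_apply,
      grsMat, Matrix.of_apply, grsEval, LinearMap.coe_mk, AddHom.coe_mk,
      eval_mem_degreeLT hp (α i), Finset.mul_sum]
    exact Finset.sum_congr rfl fun m _ => by ring
  · rintro ⟨c, rfl⟩
    refine ⟨∑ m : Fin k, C (c m) * X ^ (m : ℕ), ?_, ?_⟩
    · refine Submodule.sum_mem _ fun m _ => ?_
      exact mem_degreeLT.2 ((degree_C_mul_X_pow_le _ _).trans_lt (Nat.cast_lt.2 m.is_lt))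
    · funext i
      simp only [grsEval, LinearMap.coe_mk, AddHom.coe_mk, eval_finset_sum, eval_mul, eval_C,
        eval_pow, eval_X, Matrix.mulVecLin_apply, Matrix.mulVec, dotProduct,
        Matrix.transpose_apply, grsMat, Matrix.of_apply, Finset.mul_sum]
      exact (Finset.sum_congr rfl fun m _ => by ring).symm

lemma dualCode_range_transpose {n k : ℕ} (M : Matrix (Fin k) (Fin n) F) :
    dualCode (LinearMap.range Mᵀ.mulVecLin) = LinearMap.ker M.mulVecLin := by
  have key : ∀ (c : Fin k → F) (w : Fin n → F),
      ∑ i, (Mᵀ.mulVecLin c) i * w i = ∑ m, c m * (M.mulVecLin w) m := by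
    intro c w
    simp only [Matrix.mulVecLin_apply, Matrix.mulVec, dotProduct, Matrix.transpose_apply,
      Finset.sum_mul, Finset.mul_sum]
    rw [Finset.sum_comm]
    exact Finset.sum_congr rfl fun m _ => Finset.sum_congr rfl fun i _ => by ring
  ext w
  constructor
  · intro hw
    rw [LinearMap.mem_ker]
    funext m
    have h := hw (Mᵀ.mulVecLin (Pi.single m 1)) ⟨_, rfl⟩
    rw [key] at h
    simpa [Pi.single_apply] using h
  · intro hw c hc
    obtain ⟨x, rfl⟩ := hc
    rw [key, LinearMap.mem_ker.1 hw]
    simp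


lemma grsMat_mulVecLin (n k : ℕ) (α v : Fin n → F) (c : Fin k → F) :
    (grsMat n k α v)ᵀ.mulVecLin c = grsEval n α v (∑ m : Fin k, C (c m) * X ^ (m : ℕ)) := by
  funext i
  simp only [grsEval, LinearMap.coe_mk, AddHom.coe_mk, eval_finset_sum, eval_mul, eval_C,
    eval_pow, eval_X, Matrix.mulVecLin_apply, Matrix.mulVec, dotProduct,
    Matrix.transpose_apply, grsMat, Matrix.of_apply, Finset.mul_sum]
  exact Finset.sum_congr rfl fun m _ => by ring

lemma grsMat_transpose_injective {n k : ℕ} (α v : Fin n → F) (hα : Function.Injective α)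
    (hv : ∀ i, v i ≠ 0) (hkn : k ≤ n) :
    Function.Injective (grsMat n k α v)ᵀ.mulVecLin := by
  rw [← LinearMap.ker_eq_bot, eq_bot_iff]
  intro c hc
  rw [LinearMap.mem_ker, grsMat_mulVecLin] at hc
  set p : F[X] := ∑ m : Fin k, C (c m) * X ^ (m : ℕ) with hp
  have hdeg : p.degree < (k : ℕ) := by
    refine (degree_sum_le _ _).trans_lt ?_
    rw [Finset.sup_lt_iff (by exact_mod_cast WithBot.bot_lt_coe k)]
    intro m _
    exact (degree_C_mul_X_pow_le _ _).trans_lt (Nat.cast_lt.2 m.is_lt)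
  have hev : ∀ i : Fin n, p.eval (α i) = 0 := by
    intro i
    have := congrFun hc i
    simp only [grsEval, LinearMap.coe_mk, AddHom.coe_mk, Pi.zero_apply] at this
    exact (mul_eq_zero.1 this).resolve_left (hv i)
  have hp0 : p = 0 := by
    refine Polynomial.eq_zero_of_degree_lt_of_eval_index_eq_zero
      (Finset.univ : Finset (Fin n)) hα.injOn ?_ (fun i _ => hev i)
    refine hdeg.trans_le ?_
    rw [Finset.card_univ, Fintype.card_fin]
    exact_mod_cast hkn
  have hcoeff : ∀ m : Fin k, p.coeff m = c m := by
    intro m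
    rw [hp, finset_sum_coeff, Finset.sum_eq_single m]
    · simp
    · intro m' _ hne
      have h' : (m' : ℕ) ≠ (m : ℕ) := fun h => hne (Fin.val_injective h)
      rw [coeff_C_mul, coeff_X_pow, if_neg (Ne.symm h'), mul_zero]
    · simp
  simp only [Submodule.mem_bot]
  funext m
  rw [← hcoeff m, hp0, coeff_zero, Pi.zero_apply]

lemma finrank_GRS {n k : ℕ} (α v : Fin n → F) (hα : Function.Injective α)
    (hv : ∀ i, v i ≠ 0) (hkn : k ≤ n) :
    Module.finrank F (GRS n k α v) = k := by
  rw [GRS_eq_range, LinearMap.finrank_range_of_inj (grsMat_transpose_injective α v hα hv hkn),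
    Module.finrank_fin_fun]

lemma finrank_dualCode_GRS {n k : ℕ} (α v : Fin n → F) (hα : Function.Injective α)
    (hv : ∀ i, v i ≠ 0) (hkn : k ≤ n) :
    Module.finrank F (dualCode (GRS n k α v)) = n - k := by
  rw [GRS_eq_range, dualCode_range_transpose]
  have h1 := LinearMap.finrank_range_add_finrank_ker (grsMat n k α v).mulVecLin
  rw [Module.finrank_fin_fun] at h1
  have h2 : Module.finrank F (LinearMap.range (grsMat n k α v).mulVecLin) = k := by
    have : (grsMat n k α v).rank = ((grsMat n k α v)ᵀ).rank :=
      (Matrix.rank_transpose _).symm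
    rw [Matrix.rank, Matrix.rank] at this
    rw [this, LinearMap.finrank_range_of_inj (grsMat_transpose_injective α v hα hv hkn),
      Module.finrank_fin_fun]
  omega

theorem dual_GRS {F : Type*} [Field F] [Fintype F] {n k : ℕ}
    (α v : Fin n → F) (hα : Function.Injective α) (hv : ∀ i, v i ≠ 0)
    (hk : 1 ≤ k) (hkn : k < n) :
    dualCode (GRS n k α v) =
      GRS n (n - k) α (fun i => (v i * ∏ j ∈ Finset.univ.erase i, (α i - α j))⁻¹) := by
  set u : Fin n → F := fun i => (v i * ∏ j ∈ Finset.univ.erase i, (α i - α j))⁻¹ with hu_def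
  have hP : ∀ i : Fin n, (∏ j ∈ Finset.univ.erase i, (α i - α j)) ≠ 0 := by
    intro i
    refine Finset.prod_ne_zero_iff.2 fun j hj => ?_
    rw [sub_ne_zero]
    exact fun h => (Finset.mem_erase.1 hj).1 (hα h).symm
  have hu : ∀ i, u i ≠ 0 := fun i => inv_ne_zero (mul_ne_zero (hv i) (hP i))
  have hle : GRS n (n - k) α u ≤ dualCode (GRS n k α v) := by
    rintro w ⟨g, hg, rfl⟩ c ⟨f, hf, rfl⟩
    have hterm : ∀ i : Fin n,
        grsEval n α v f i * grsEval n α u g i =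
          (f * g).eval (α i) * (∏ j ∈ Finset.univ.erase i, (α i - α j))⁻¹ := by
      intro i
      have h1 : u i = (v i)⁻¹ * (∏ j ∈ Finset.univ.erase i, (α i - α j))⁻¹ := mul_inv _ _
      simp only [grsEval, LinearMap.coe_mk, AddHom.coe_mk, eval_mul, h1]
      rw [show v i * eval (α i) f * ((v i)⁻¹ * (∏ j ∈ Finset.univ.erase i, (α i - α j))⁻¹ * eval (α i) g)
          = v i * (v i)⁻¹ * (eval (α i) f * eval (α i) g * (∏ j ∈ Finset.univ.erase i, (α i - α j))⁻¹) from by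
          ring, mul_inv_cancel₀ (hv i), one_mul]
    rw [Finset.sum_congr rfl fun i _ => hterm i]
    refine sum_eval_div_prod_eq_zero α hα (f * g) ?_
    rcases eq_or_ne f 0 with rfl | hf0
    · rw [zero_mul, degree_zero]
      exact WithBot.bot_lt_coe _
    rcases eq_or_ne g 0 with rfl | hg0
    · rw [mul_zero, degree_zero]
      exact WithBot.bot_lt_coe _
    rw [SetLike.mem_coe, mem_degreeLT, degree_eq_natDegree hf0, Nat.cast_lt] at hf
    rw [SetLike.mem_coe, mem_degreeLT, degree_eq_natDegree hg0, Nat.cast_lt] at hg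
    rw [← natDegree_lt_iff_degree_lt (mul_ne_zero hf0 hg0), natDegree_mul hf0 hg0]
    omega
  refine (Submodule.eq_of_le_of_finrank_eq hle ?_).symm
  rw [finrank_GRS α u hα hu (Nat.sub_le n k),
    finrank_dualCode_GRS α v hα hv hkn.le]
end

section
/- Let C and D be linear codes in F_q^n, both with support equal to {1,...,n}, and let H = (C ⋆ D)^⊥. Then the minimum distance of H satisfies d_H ≥ d_{C^⊥} + d_{D^⊥} - 2. -/
/-! A minimum-weight word `h` of `(C ⋆ D)^⊥` turns every `c ∈ C` into a word `c ⋆ h`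
of `D^⊥`. Any fewer than `d_{C^⊥}` coordinates of a word of `C` can be prescribed, so `c` can
be chosen to vanish on `d_{C^⊥} - 2` points of the support of `h` while `c ⋆ h ≠ 0`; hence
`d_{D^⊥} ≤ d_H - (d_{C^⊥} - 2)`. Full support of `C` and `D` means that their duals have no
word of weight one, which rules out the degenerate case `d_H < d_{C^⊥} - 1`. -/

open Polynomial Finset

variable {F : Type*} [Field F]

lemma hammingNorm_le_card_of_eq_zero_of_notMem {ι M : Type*} [Fintype ι] [Zero M] [DecidableEq M]
    {w : ι → M} {T : Finset ι} (hw : ∀ i ∉ T, w i = 0) : hammingNorm w ≤ T.card :=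
  card_le_card fun i hi => by_contra fun hiT => (mem_filter.mp hi).2 (hw i hiT)

section Codes

variable {n : ℕ}

lemma mul_mem_dualCode_of_mem_dualCode_starProd {C D : Submodule F (Fin n → F)}
    {c h : Fin n → F} (hc : c ∈ C) (hh : h ∈ dualCode (starProd C D)) :
    c * h ∈ dualCode D := by
  intro d hd
  calc ∑ i, d i * (c * h) i = ∑ i, (c * d) i * h i :=
        Finset.sum_congr rfl fun i _ => by simp only [Pi.mul_apply]; ring
    _ = 0 := hh _ (Submodule.subset_span ⟨c, hc, d, hd, rfl⟩)

variable [DecidableEq F]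

lemma two_le_hammingNorm_of_mem_dualCode {C : Submodule F (Fin n → F)}
    (hC : ∀ i, ∃ c ∈ C, c i ≠ 0) {w : Fin n → F} (hw : w ∈ dualCode C) (hw0 : w ≠ 0) :
    2 ≤ hammingNorm w := by
  obtain ⟨j, hj⟩ := Function.ne_iff.mp hw0
  by_contra! hlt
  have hsingle : ∀ i ≠ j, w i = 0 := fun i hij => by_contra fun hi =>
    hij (card_le_one.mp (Nat.lt_succ_iff.mp hlt) i (by simpa using hi) j (by simpa using hj))
  obtain ⟨c, hc, hcj⟩ := hC j
  have hsum : ∑ i, c i * w i = c j * w j :=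
    sum_eq_single j (fun i _ hij => by rw [hsingle i hij, mul_zero]) (by simp)
  exact mul_ne_zero hcj hj (hsum ▸ hw c hc)

lemma two_le_of_isMinDist_dualCode {C : Submodule F (Fin n → F)}
    (hC : ∀ i, ∃ c ∈ C, c i ≠ 0) {d : ℕ} (hd : IsMinDist (dualCode C) d) : 2 ≤ d := by
  obtain ⟨w, hw, hw0, rfl⟩ := hd.1
  exact two_le_hammingNorm_of_mem_dualCode hC hw hw0

lemma exists_mem_eqOn_of_card_lt {C : Submodule F (Fin n → F)} {d : ℕ}
    (hmin : ∀ w ∈ dualCode C, w ≠ 0 → d ≤ hammingNorm w) {T : Finset (Fin n)}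
    (hT : T.card < d) (y : Fin n → F) : ∃ c ∈ C, ∀ i ∈ T, c i = y i := by
  let π : (Fin n → F) →ₗ[F] (T → F) := LinearMap.funLeft F F Subtype.val
  suffices hπ : C.map π = ⊤ by
    obtain ⟨c, hc, hcy⟩ := hπ.symm ▸ Submodule.mem_top (x := fun t : T => y t)
    exact ⟨c, hc, fun i hi => congrFun hcy ⟨i, hi⟩⟩
  by_contra hne
  obtain ⟨f, hf0, hfC⟩ := (C.map π).exists_dual_map_eq_bot_of_lt_top (lt_top_iff_ne_top.2 hne)
    inferInstance
  -- the functional `f ∘ π` is pairing with `w`, a word of `C^⊥` supported in `T`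
  let w : Fin n → F := fun i => f (π fun j => if i = j then 1 else 0)
  have hpair : ∀ x, ∑ i, x i * w i = f (π x) := fun x =>
    ((f ∘ₗ π).pi_apply_eq_sum_univ x).symm
  have hw : w ∈ dualCode C := fun c hc => by
    rw [hpair, ← Submodule.mem_bot F, ← hfC]
    exact Submodule.mem_map_of_mem (Submodule.mem_map_of_mem hc)
  have hw0 : w ≠ 0 := by
    intro hw0
    refine hf0 (LinearMap.ext fun z => ?_)
    obtain ⟨x, rfl⟩ := LinearMap.funLeft_surjective_of_injective F F _ Subtype.val_injective z
    rw [← hpair, hw0]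
    simp
  have hwT : ∀ i ∉ T, w i = 0 := fun i hi => by
    have : (π fun j => if i = j then (1 : F) else 0) = 0 := by
      ext t
      simp [π, LinearMap.funLeft, show i ≠ t from fun h => hi (h ▸ t.2)]
    simp [w, this]
  have := hammingNorm_le_card_of_eq_zero_of_notMem hwT
  have := hmin w hw hw0
  omega

lemma exists_mem_dualCode_hammingNorm_add_card_le {C D : Submodule F (Fin n → F)} {dC : ℕ}
    (hmin : ∀ w ∈ dualCode C, w ≠ 0 → dC ≤ hammingNorm w) {h : Fin n → F}
    (hh : h ∈ dualCode (starProd C D)) {T : Finset (Fin n)} (hTh : ∀ i ∈ T, h i ≠ 0)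
    (hT : T.card < dC) {j : Fin n} (hj : j ∈ T) :
    ∃ w ∈ dualCode D, w ≠ 0 ∧ hammingNorm w + T.card ≤ hammingNorm h + 1 := by
  obtain ⟨c, hc, hcT⟩ := exists_mem_eqOn_of_card_lt hmin hT (Pi.single j 1)
  refine ⟨c * h, mul_mem_dualCode_of_mem_dualCode_starProd hc hh, ?_, ?_⟩
  · exact Function.ne_iff.mpr ⟨j, by simpa [hcT j hj] using hTh j hj⟩
  · set S := univ.filter (h · ≠ 0)
    have hTS : T.erase j ⊆ S := fun i hi => by simpa [S] using hTh i (mem_of_mem_erase hi)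
    have hsupp : ∀ i ∉ S \ T.erase j, (c * h) i = 0 := by
      intro i hi
      rw [mem_sdiff, not_and_or, not_not] at hi
      rcases hi with hiS | hiT
      · simpa [S] using Or.inr hiS
      · simp [hcT i (mem_of_mem_erase hiT), ne_of_mem_erase hiT]
    have hwt := hammingNorm_le_card_of_eq_zero_of_notMem hsupp
    have hTS' := card_le_card hTS
    rw [card_sdiff_of_subset hTS] at hwt
    rw [card_erase_of_mem hj] at hwt hTS'
    have := card_pos.mpr ⟨j, hj⟩
    have hS : hammingNorm h = S.card := rfl
    omega

end Codes

theorem dual_of_star_min_dist_lower_bound_general {F : Type*} [Field F]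
    [DecidableEq F] {n dC dD dH : ℕ} (C D : Submodule F (Fin n → F))
    (hC : ∀ i, ∃ c ∈ C, c i ≠ 0) (hD : ∀ i, ∃ d ∈ D, d i ≠ 0)
    (h1 : IsMinDist (dualCode C) dC) (h2 : IsMinDist (dualCode D) dD)
    (h3 : IsMinDist (dualCode (starProd C D)) dH) :
    dC + dD - 2 ≤ dH := by
  obtain ⟨h, hh, hh0, rfl⟩ := h3.1
  have hdC := two_le_of_isMinDist_dualCode hC h1
  have hdD := two_le_of_isMinDist_dualCode hD h2
  have hwt := hammingNorm_pos_iff.mpr hh0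
  obtain ⟨T, hTS, hTcard⟩ :=
    exists_subset_card_eq (s := univ.filter (h · ≠ 0)) (n := min (dC - 1) (hammingNorm h)) (by
      unfold hammingNorm; omega)
  obtain ⟨j, hj⟩ := card_pos.mp (show 0 < T.card by omega)
  obtain ⟨w, hw, hw0, hwT⟩ := exists_mem_dualCode_hammingNorm_add_card_le h1.2 hh
    (fun i hi => by simpa using hTS hi) (by omega) hj
  have := h2.2 w hw hw0
  -- if `T` were the whole support of `h`, the word `w` would have weight one
  omega

theorem dual_of_star_min_dist_lower_bound {F : Type*} [Field F] [Fintype F]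
    [DecidableEq F] {n dC dD dH : ℕ} (C D : Submodule F (Fin n → F))
    (hC : ∀ i, ∃ c ∈ C, c i ≠ 0) (hD : ∀ i, ∃ d ∈ D, d i ≠ 0)
    (h1 : IsMinDist (dualCode C) dC) (h2 : IsMinDist (dualCode D) dD)
    (h3 : IsMinDist (dualCode (starProd C D)) dH) :
    dC + dD - 2 ≤ dH :=
  dual_of_star_min_dist_lower_bound_general C D hC hD h1 h2 h3
end

section
/- Let C1 and C2 be linear codes in F_q^n of dimensions k1 and k2 respectively, each with support equal to {1,...,n}, and suppose (C1 ⋆ C2)^⊥ ≠ 0. Then d_{C1 ⋆ C2} - 1 ≤ max{0, n - (k1 + k2 - 1)}. -/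
open Polynomial Finset

variable {F : Type*} [Field F]

variable {n : ℕ}

section helpers

lemma mul_mem_starProd {C D : Submodule F (Fin n → F)} {c d : Fin n → F}
    (hc : c ∈ C) (hd : d ∈ D) : c * d ∈ starProd C D :=
  Submodule.subset_span ⟨c, hc, d, hd, rfl⟩

lemma hammingNorm_le_card [DecidableEq F] {x : Fin n → F} {A : Finset (Fin n)}
    (h : ∀ i, i ∉ A → x i = 0) : hammingNorm x ≤ A.card := by
  apply Finset.card_le_card
  intro i hi
  simp only [Finset.mem_filter, Finset.mem_univ, true_and] at hi
  by_contra hiA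
  exact hi (h i hiA)

/-- If vanishing on `A` forces a codeword to vanish, then `dim ≤ |A|`. -/
lemma finrank_le_card_of_inj (C : Submodule F (Fin n → F)) (A : Finset (Fin n))
    (h : ∀ c ∈ C, (∀ i ∈ A, c i = 0) → c = 0) :
    Module.finrank F C ≤ A.card := by
  let f : C →ₗ[F] ({i // i ∈ A} → F) :=
    { toFun := fun c i => c.1 i.1
      map_add' := fun a b => rfl
      map_smul' := fun r a => rfl }
  have hinj : Function.Injective f := by
    intro a b hab
    apply Subtype.ext
    apply sub_eq_zero.mp
    apply h _ (sub_mem a.2 b.2)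
    intro i hi
    have := congrFun hab ⟨i, hi⟩
    simpa [f, sub_eq_zero] using this
  have := LinearMap.finrank_le_finrank_of_injective hinj
  simpa [Module.finrank_pi] using this

lemma exists_isMinDist [DecidableEq F] (C : Submodule F (Fin n → F))
    (h : ∃ c ∈ C, c ≠ 0) : ∃ d, IsMinDist C d := by
  obtain ⟨c0, hc0, hc0ne⟩ := h
  have hne : {k : ℕ | ∃ c ∈ C, c ≠ 0 ∧ hammingNorm c = k}.Nonempty :=
    ⟨hammingNorm c0, c0, hc0, hc0ne, rfl⟩
  refine ⟨sInf _, Nat.sInf_mem hne, ?_⟩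
  intro c hc hcne
  exact Nat.sInf_le ⟨c, hc, hcne, rfl⟩

lemma finrank_le_map_add (g : (Fin n → F) →ₗ[F] (Fin n → F)) (p : Submodule F (Fin n → F)) :
    Module.finrank F p ≤
      Module.finrank F (p.map g) + Module.finrank F (p ⊓ LinearMap.ker g : Submodule F (Fin n → F)) := by
  classical
  have hrn := LinearMap.finrank_range_add_finrank_ker (g.comp p.subtype)
  have hr : LinearMap.range (g.comp p.subtype) = p.map g := by
    rw [LinearMap.range_comp, Submodule.range_subtype]
  have hk : LinearMap.ker (g.comp p.subtype)
      = (p ⊓ LinearMap.ker g : Submodule F (Fin n → F)).comap p.subtype := by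
    rw [LinearMap.ker_comp, Submodule.comap_inf, Submodule.comap_subtype_self]
    simp
  have hkeq : Module.finrank F (LinearMap.ker (g.comp p.subtype))
      = Module.finrank F (p ⊓ LinearMap.ker g : Submodule F (Fin n → F)) := by
    rw [hk]
    exact (Submodule.comapSubtypeEquivOfLe inf_le_left).finrank_eq
  rw [hr, hkeq] at hrn
  omega

/-- Singleton bound for codes supported on `S`. -/
lemma singleton_bound [DecidableEq F] (C : Submodule F (Fin n → F)) (S : Finset (Fin n))
    {d : ℕ} (hsupp : ∀ c ∈ C, ∀ i, i ∉ S → c i = 0) (hmin : IsMinDist C d) :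
    Module.finrank F C + d ≤ S.card + 1 := by
  obtain ⟨⟨x, hxC, hxne, hxnorm⟩, hlb⟩ := hmin
  have hd1 : 1 ≤ d := by
    rw [← hxnorm]
    exact Nat.one_le_iff_ne_zero.mpr (hammingNorm_ne_zero_iff.mpr hxne)
  have hdS : d ≤ S.card := by
    rw [← hxnorm]; exact hammingNorm_le_card (hsupp x hxC)
  obtain ⟨T, hTS, hTcard⟩ := Finset.exists_subset_card_eq (s := S) (n := d - 1) (by omega)
  have hkey : Module.finrank F C ≤ (S \ T).card := by
    apply finrank_le_card_of_inj
    intro c hc hcz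
    by_contra hcne
    have h1 := hlb c hc hcne
    have h2 : hammingNorm c ≤ T.card := by
      apply hammingNorm_le_card
      intro i hiT
      by_cases hiS : i ∈ S
      · exact hcz i (Finset.mem_sdiff.mpr ⟨hiS, hiT⟩)
      · exact hsupp c hc i hiS
    omega
  have hcard : (S \ T).card = S.card - (d - 1) := by
    rw [Finset.card_sdiff_of_subset hTS, hTcard]
  omega

end helpers

section main
variable [DecidableEq F]

def vanOn (S : Finset (Fin n)) : Submodule F (Fin n → F) where
  carrier := {x | ∀ i, i ∉ S → x i = 0}
  add_mem' := fun ha hb i hi => by simp [ha i hi, hb i hi]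
  zero_mem' := fun i hi => rfl
  smul_mem' := fun r x hx i hi => by simp [hx i hi]

lemma starProd_le_vanOn (C D : Submodule F (Fin n → F)) (S : Finset (Fin n))
    (h : D ≤ vanOn S) : starProd C D ≤ vanOn S := by
  rw [starProd, Submodule.span_le]
  rintro x ⟨c, hc, d, hd, rfl⟩ i hi
  have : d i = 0 := h hd i hi
  simp [this]

lemma PSB : ∀ (k2 : ℕ) (S : Finset (Fin n)) (C1 C2 : Submodule F (Fin n → F)) (d : ℕ),
    C1 ≤ vanOn S → (∀ i ∈ S, ∃ c ∈ C1, c i ≠ 0) →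
    C2 ≤ vanOn S → (∀ i ∈ S, ∃ c ∈ C2, c i ≠ 0) →
    Module.finrank F C2 = k2 → IsMinDist (starProd C1 C2) d → 2 ≤ d →
    Module.finrank F C1 + k2 + d ≤ S.card + 2 := by
  intro k2
  induction k2 using Nat.strong_induction_on with
  | _ k2 IH =>
  intro S C1 C2 d hsup1 hfull1 hsup2 hfull2 hrk2 hmin hd2
  classical
  match k2, hrk2 with
  | 0, hrk2 =>
    -- C2 = ⊥, no nonzero codeword in the product : contradiction
    exfalso
    have hC2 : C2 = ⊥ := Submodule.finrank_eq_zero.mp hrk2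
    obtain ⟨x, hx, hxne, -⟩ := hmin.1
    have : starProd C1 C2 ≤ ⊥ := by
      rw [starProd, Submodule.span_le]
      rintro y ⟨c, hc, e, he, rfl⟩
      rw [hC2] at he
      rw [(Submodule.mem_bot F).mp he]
      simp
    exact hxne ((Submodule.mem_bot F).mp (this hx))
  | 1, hrk2 =>
    -- base case : C2 is spanned by a vector nonzero on all of S
    have hC2ne : C2 ≠ ⊥ := by
      intro h; rw [h, finrank_bot] at hrk2; omega
    obtain ⟨v, hv, hvne⟩ := Submodule.ne_bot_iff C2 |>.mp hC2ne
    have hspan : Submodule.span F {v} = C2 := by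
      apply Submodule.eq_of_le_of_finrank_le
        (Submodule.span_le.mpr (Set.singleton_subset_iff.mpr hv))
      rw [hrk2, finrank_span_singleton hvne]
    have hvS : ∀ i ∈ S, v i ≠ 0 := by
      intro i hi
      obtain ⟨c, hc, hci⟩ := hfull2 i hi
      rw [← hspan] at hc
      obtain ⟨a, rfl⟩ := Submodule.mem_span_singleton.mp hc
      intro h0
      apply hci
      simp [h0]
    let g : (Fin n → F) →ₗ[F] (Fin n → F) :=
      { toFun := fun x => v * x
        map_add' := fun a b => by funext j; simp [mul_add]
        map_smul' := fun r a => by funext j; simp; ring }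
    have hmap_le : C1.map g ≤ starProd C1 C2 := by
      rintro x ⟨c, hc, rfl⟩
      have : g c = c * v := mul_comm v c
      rw [this]
      exact mul_mem_starProd hc hv
    have hker : (C1 ⊓ LinearMap.ker g : Submodule F (Fin n → F)) = ⊥ := by
      rw [eq_bot_iff]
      rintro c ⟨hc1, hcker⟩
      have hgc : v * c = 0 := hcker
      have : c = 0 := by
        funext i
        by_cases hi : i ∈ S
        · have := congrFun hgc i
          simp only [Pi.mul_apply, Pi.zero_apply] at this
          exact (mul_eq_zero.mp this).resolve_left (hvS i hi)
        · exact hsup1 hc1 i hi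
      simp [this]
    have h1 := finrank_le_map_add g C1
    rw [hker, finrank_bot] at h1
    have h2 : Module.finrank F (C1.map g) ≤ Module.finrank F (starProd C1 C2) :=
      Submodule.finrank_mono hmap_le
    have h3 := singleton_bound (starProd C1 C2) S (starProd_le_vanOn C1 C2 S hsup2) hmin
    omega
  | (m+2), hrk2 =>
    -- inductive step
    have hC2ne : C2 ≠ ⊥ := by
      intro h; rw [h, finrank_bot] at hrk2; omega
    obtain ⟨c2s, hc2s, hc2sne⟩ := Submodule.ne_bot_iff C2 |>.mp hC2ne
    obtain ⟨i0, hi0⟩ : ∃ i, c2s i ≠ 0 := by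
      by_contra h; push_neg at h; exact hc2sne (funext h)
    have hi0S : i0 ∈ S := by
      by_contra h; exact hi0 (hsup2 hc2s i0 h)
    -- shorten C2 at i0
    set C2' := C2 ⊓ LinearMap.ker (LinearMap.proj (R := F) (φ := fun _ : Fin n => F) i0)
      with hC2'def
    have hmemC2' : ∀ c, c ∈ C2' ↔ c ∈ C2 ∧ c i0 = 0 := by
      intro c
      simp [hC2'def, Submodule.mem_inf, LinearMap.mem_ker]
    have hm'lt : Module.finrank F C2' < m + 2 := by
      rw [← hrk2]
      apply Submodule.finrank_lt_finrank_of_lt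
      apply lt_of_le_of_ne inf_le_left
      intro h
      rw [← h] at hc2s
      exact hi0 ((hmemC2' c2s).mp hc2s).2
    have hm'ge : m + 1 ≤ Module.finrank F C2' := by
      have hle : C2 ≤ C2' ⊔ Submodule.span F {c2s} := by
        intro c hc
        have : c = (c - (c i0 / c2s i0) • c2s) + (c i0 / c2s i0) • c2s := by ring
        rw [this]
        apply Submodule.add_mem_sup
        · rw [hmemC2']
          refine ⟨sub_mem hc (Submodule.smul_mem _ _ hc2s), ?_⟩
          simp [div_mul_cancel₀ _ hi0]
        · exact Submodule.smul_mem _ _ (Submodule.mem_span_singleton_self c2s)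
      have h1 : Module.finrank F C2 ≤ Module.finrank F (C2' ⊔ Submodule.span F {c2s} : Submodule F (Fin n → F)) :=
        Submodule.finrank_mono hle
      have h2 := Submodule.finrank_sup_add_finrank_inf_eq C2' (Submodule.span F {c2s})
      have h3 : Module.finrank F (Submodule.span F {c2s} : Submodule F (Fin n → F)) = 1 :=
        finrank_span_singleton hc2sne
      omega
    set m' := Module.finrank F C2' with hm'def
    -- the support of C2'
    set S' := S.filter (fun j => ∃ c ∈ C2', c j ≠ 0) with hS'def
    have hS'sub : S' ⊆ S := Finset.filter_subset _ _
    have hi0S' : i0 ∉ S' := by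
      intro h
      rw [hS'def, Finset.mem_filter] at h
      obtain ⟨-, c, hc, hci0⟩ := h
      exact hci0 ((hmemC2' c).mp hc).2
    have hsup2' : C2' ≤ vanOn S' := by
      intro c hc i hi
      by_cases hiS : i ∈ S
      · by_contra hne
        exact hi (Finset.mem_filter.mpr ⟨hiS, c, hc, hne⟩)
      · exact hsup2 ((hmemC2' c).mp hc).1 i hiS
    have hfull2' : ∀ i ∈ S', ∃ c ∈ C2', c i ≠ 0 := by
      intro i hi
      exact (Finset.mem_filter.mp hi).2
    -- restrict C1 to the coordinates S'
    let g : (Fin n → F) →ₗ[F] (Fin n → F) :=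
      { toFun := fun x j => if j ∈ S' then x j else 0
        map_add' := fun a b => by funext j; by_cases h : j ∈ S' <;> simp [h]
        map_smul' := fun r a => by funext j; by_cases h : j ∈ S' <;> simp [h] }
    have hgapply : ∀ x j, g x j = if j ∈ S' then x j else 0 := fun x j => rfl
    set C1' := C1.map g with hC1'def
    have hsup1' : C1' ≤ vanOn S' := by
      rintro x ⟨c, hc, rfl⟩ i hi
      simp [hgapply, hi]
    have hfull1' : ∀ i ∈ S', ∃ c ∈ C1', c i ≠ 0 := by
      intro i hi
      obtain ⟨c, hc, hci⟩ := hfull1 i (hS'sub hi)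
      exact ⟨g c, Submodule.mem_map_of_mem hc, by simpa [hgapply, hi] using hci⟩
    set T := S \ S' with hTdef
    have hi0T : i0 ∈ T := Finset.mem_sdiff.mpr ⟨hi0S, hi0S'⟩
    set K := (C1 ⊓ LinearMap.ker g : Submodule F (Fin n → F)) with hKdef
    have hKmem : ∀ c, c ∈ K ↔ c ∈ C1 ∧ g c = 0 := by
      intro c; simp [hKdef, Submodule.mem_inf, LinearMap.mem_ker]
    have hKzeroS' : ∀ c ∈ K, ∀ i ∈ S', c i = 0 := by
      intro c hc i hi
      have := congrFun ((hKmem c).mp hc).2 i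
      simpa [hgapply, hi] using this
    have hKvan : K ≤ vanOn T := by
      intro c hc i hi
      rw [hTdef, Finset.mem_sdiff] at hi
      push_neg at hi
      by_cases hiS : i ∈ S
      · exact hKzeroS' c hc i (hi hiS)
      · exact hsup1 ((hKmem c).mp hc).1 i hiS
    have hKle : Module.finrank F K ≤ T.card := by
      apply finrank_le_card_of_inj
      intro c hc hT
      funext i
      by_cases hiS : i ∈ S
      · by_cases hiS' : i ∈ S'
        · exact hKzeroS' c hc i hiS'
        · exact hT i (Finset.mem_sdiff.mpr ⟨hiS, hiS'⟩)
      · exact hsup1 ((hKmem c).mp hc).1 i hiS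
    -- the key strict inequality
    have hKlt : Module.finrank F K ≠ T.card := by
      intro heq
      have hvrk : Module.finrank F (vanOn T : Submodule F (Fin n → F)) ≤ T.card := by
        apply finrank_le_card_of_inj
        intro c hc hT
        funext i
        by_cases hiT : i ∈ T
        · exact hT i hiT
        · exact hc i hiT
      have hKeq : K = vanOn T :=
        Submodule.eq_of_le_of_finrank_le hKvan (by omega)
      have he : (fun j => if j = i0 then (1:F) else 0) ∈ (vanOn T : Submodule F (Fin n → F)) := by
        intro j hj
        have : j ≠ i0 := fun h => hj (h ▸ hi0T)
        simp [this]
      rw [← hKeq] at he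
      have heC1 : (fun j => if j = i0 then (1:F) else 0) ∈ C1 := ((hKmem _).mp he).1
      set x := (fun j => if j = i0 then (1:F) else 0) * c2s with hxdef
      have hxmem : x ∈ starProd C1 C2 := mul_mem_starProd heC1 hc2s
      have hxne : x ≠ 0 := by
        intro h
        apply hi0
        have := congrFun h i0
        simpa [hxdef] using this
      have hxnorm : hammingNorm x ≤ ({i0} : Finset (Fin n)).card := by
        apply hammingNorm_le_card
        intro i hi
        have : i ≠ i0 := by simpa using hi
        simp [hxdef, this]
      have := hmin.2 x hxmem hxne
      simp at hxnorm
      omega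
    have hrank1 := finrank_le_map_add g C1
    rw [← hC1'def, ← hKdef] at hrank1
    -- the product code of the restricted codes
    have hD'le : starProd C1' C2' ≤ starProd C1 C2 := by
      rw [starProd, Submodule.span_le]
      rintro x ⟨a, ha, b, hb, rfl⟩
      rw [hC1'def] at ha
      obtain ⟨c, hc, rfl⟩ := ha
      have : g c * b = c * b := by
        funext j
        by_cases h : j ∈ S'
        · simp [hgapply, h]
        · have : b j = 0 := hsup2' hb j h
          simp [hgapply, h, this]
      rw [this]
      exact mul_mem_starProd hc ((hmemC2' b).mp hb).1
    -- nonzero element of the restricted product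
    have hC2'ne : C2' ≠ ⊥ := by
      intro h; rw [h, finrank_bot] at hm'def; omega
    obtain ⟨c2', hc2', hc2'ne⟩ := Submodule.ne_bot_iff C2' |>.mp hC2'ne
    obtain ⟨j, hj⟩ : ∃ j, c2' j ≠ 0 := by
      by_contra h; push_neg at h; exact hc2'ne (funext h)
    have hjS' : j ∈ S' := by
      by_contra h; exact hj (hsup2' hc2' j h)
    obtain ⟨c1, hc1, hc1j⟩ := hfull1 j (hS'sub hjS')
    have hx0mem : g c1 * c2' ∈ starProd C1' C2' :=
      mul_mem_starProd (Submodule.mem_map_of_mem hc1) hc2'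
    have hx0ne : g c1 * c2' ≠ 0 := by
      intro h
      have := congrFun h j
      simp [hgapply, hjS'] at this
      rcases this with h1 | h2
      · exact hc1j h1
      · exact hj h2
    obtain ⟨d', hd'⟩ := exists_isMinDist (starProd C1' C2') ⟨_, hx0mem, hx0ne⟩
    have hdd' : d ≤ d' := by
      obtain ⟨y, hy, hyne, hynorm⟩ := hd'.1
      rw [← hynorm]
      exact hmin.2 y (hD'le hy) hyne
    -- apply the induction hypothesis
    have hIH := IH m' (by omega) S' C1' C2' d' hsup1' hfull1' hsup2' hfull2' rfl hd' (by omega)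
    have hTcard : T.card = S.card - S'.card := Finset.card_sdiff_of_subset hS'sub
    have hScard : S'.card ≤ S.card := Finset.card_le_card hS'sub
    omega

end main


theorem product_singleton_bound {F : Type*} [Field F] [Fintype F] [DecidableEq F]
    {n k1 k2 dS : ℕ} (C1 C2 : Submodule F (Fin n → F))
    (hd1 : Module.finrank F C1 = k1) (hd2 : Module.finrank F C2 = k2)
    (hs1 : ∀ i, ∃ c ∈ C1, c i ≠ 0) (hs2 : ∀ i, ∃ c ∈ C2, c i ≠ 0)
    (hne : starProd C1 C2 ≠ ⊤) (hdS : IsMinDist (starProd C1 C2) dS) :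
    dS - 1 ≤ max 0 (n - (k1 + k2 - 1)) := by
  by_cases hd : dS ≤ 1
  · omega
  · have h := PSB k2 (Finset.univ) C1 C2 dS
      (fun c _ i hi => absurd (Finset.mem_univ i) hi) (fun i _ => hs1 i)
      (fun c _ i hi => absurd (Finset.mem_univ i) hi) (fun i _ => hs2 i)
      hd2 hdS (by omega)
    rw [hd1] at h
    have hcard : (Finset.univ : Finset (Fin n)).card = n := by simp
    have hk1 : 1 ≤ k1 := by
      rcases Nat.eq_zero_or_pos k1 with h0 | h1
      · exfalso
        obtain ⟨x, hx, hxne, hxnorm⟩ := hdS.1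
        obtain ⟨i, hi⟩ : ∃ i, x i ≠ 0 := by
          by_contra hh; push_neg at hh; exact hxne (funext hh)
        obtain ⟨c, hc, hci⟩ := hs1 i
        have : C1 = ⊥ := Submodule.finrank_eq_zero.mp (hd1.trans h0)
        rw [this] at hc
        exact hci (by simp [(Submodule.mem_bot F).mp hc])
      · exact h1
    omega
end
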